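/- arXiv:2309.10113 — 2 statements merged into one kernel-verified Lean document; each statement's English description precedes it below -/
import Mathlib

section
/- For the wheel W_l (l ≥ 5), a graph G on the same vertex set satisfies: G is the l-wheel with hub v if and only if G minus v is an l-cycle and v is contained in exactly C(l,2) connected triples of G. Consequently, wheels W_l with l ≥ 5 are strongly T₃-reconstructible. -/
set_option linter.unusedSectionVars false
set_option linter.unusedVariables false

/-- The set of connected triples of a graph: `3`-subsets of the vertex set
inducing a connected subgraph. -/
def connTriples {V : Type*} (G : SimpleGraph V) : Set (Finset V) :=
  {X | X.card = 3 ∧ (G.induce (X : Set V)).Connected}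

/-- The cycle graph on `ℤ/lℤ`, with edges `{i, i+1}`. -/
def cycleGraph (l : ℕ) : SimpleGraph (ZMod l) :=
  SimpleGraph.fromRel (fun i j => j = i + 1)

/-- The `l`-wheel on `Option (ℤ/lℤ)`: the rim is the cycle on the `some`
vertices and the hub `none` is adjacent to every rim vertex. -/
def wheelGraph (l : ℕ) : SimpleGraph (Option (ZMod l)) :=
  SimpleGraph.fromRel (fun a b =>
    (∃ i : ZMod l, a = some i ∧ b = some (i + 1)) ∨ (a = none ∧ b ≠ none))

section helpers
variable {V : Type*} {G : SimpleGraph V} [DecidableEq V]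

lemma conn_of_dom {s : Set V} {a : V} (ha : a ∈ s)
    (h : ∀ b ∈ s, b ≠ a → G.Adj a b) : (G.induce s).Connected := by
  rw [SimpleGraph.connected_iff]
  refine ⟨?_, ⟨⟨a, ha⟩⟩⟩
  have key : ∀ z : s, (G.induce s).Reachable ⟨a, ha⟩ z := by
    rintro ⟨z, hz⟩
    by_cases hza : z = a
    · subst hza; rfl
    · exact SimpleGraph.Adj.reachable (by exact h z hz hza)
  intro x y
  exact (key x).symm.trans (key y)

lemma exists_adj_of_conn {s : Set V} (h : (G.induce s).Connected) {a b : V}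
    (ha : a ∈ s) (hb : b ∈ s) (hab : a ≠ b) : ∃ c ∈ s, G.Adj a c := by
  obtain ⟨w⟩ := h.preconnected ⟨a, ha⟩ ⟨b, hb⟩
  have hnil : ¬ w.Nil := SimpleGraph.Walk.not_nil_of_ne (fun h => hab (congrArg Subtype.val h))
  have hadj := w.adj_snd hnil
  exact ⟨(w.getVert 1).1, (w.getVert 1).2, hadj⟩

lemma triple_mem_of_dom {a b c : V} (h1 : G.Adj a b) (h2 : G.Adj a c) (hbc : b ≠ c) :
    ({a, b, c} : Finset V) ∈ connTriples G := by
  constructor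
  · rw [Finset.card_eq_three]
    exact ⟨a, b, c, h1.ne, h2.ne, hbc, rfl⟩
  · apply conn_of_dom (a := a) (by simp)
    intro x hx hxa
    simp only [Finset.coe_insert, Set.mem_insert_iff, Finset.coe_singleton,
      Set.mem_singleton_iff] at hx
    rcases hx with rfl | rfl | rfl
    · exact absurd rfl hxa
    · exact h1
    · exact h2

lemma triple_nbr {a b c : V} (h : ({a, b, c} : Finset V) ∈ connTriples G)
    (hab : a ≠ b) : G.Adj a b ∨ G.Adj a c := by
  obtain ⟨x, hx, hadj⟩ := exists_adj_of_conn h.2 (a := a) (b := b) (by simp) (by simp) hab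
  simp only [Finset.coe_insert, Set.mem_insert_iff, Finset.coe_singleton,
    Set.mem_singleton_iff] at hx
  rcases hx with rfl | rfl | rfl
  · exact absurd hadj G.irrefl
  · exact Or.inl hadj
  · exact Or.inr hadj

end helpers

section zmod
variable {l : ℕ}

lemma zmod_cast_ne (hl : 5 ≤ l) {a b : ℕ} (h1 : a < b) (h2 : b - a ≤ 4) :
    (a : ZMod l) ≠ (b : ZMod l) := by
  haveI : NeZero l := ⟨by omega⟩
  intro h
  have hz : ((b - a : ℕ) : ZMod l) = 0 := by
    push_cast [Nat.cast_sub h1.le]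
    rw [← h]; ring
  rw [ZMod.natCast_eq_zero_iff] at hz
  have := Nat.le_of_dvd (by omega) hz
  omega

lemma shift_ne (hl : 5 ≤ l) (x : ZMod l) {a b : ℕ} (h1 : a < b) (h2 : b - a ≤ 4) :
    x + (a : ZMod l) ≠ x + (b : ZMod l) := by
  intro h
  exact zmod_cast_ne hl h1 h2 (by exact add_left_cancel h)

lemma shift_ne₀ (hl : 5 ≤ l) (x : ZMod l) {b : ℕ} (h1 : 0 < b) (h2 : b ≤ 4) :
    x ≠ x + (b : ZMod l) := by
  have := shift_ne hl x (a := 0) h1 (by omega)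
  simpa using this

lemma wheel_adj_none (i : ZMod l) : (wheelGraph l).Adj none (some i) := by
  simp [wheelGraph, SimpleGraph.fromRel_adj]

lemma wheel_adj_some {i j : ZMod l} :
    (wheelGraph l).Adj (some i) (some j) ↔ i ≠ j ∧ (j = i + 1 ∨ i = j + 1) := by
  simp [wheelGraph, SimpleGraph.fromRel_adj]

lemma cycle_adj {i j : ZMod l} :
    (_root_.cycleGraph l).Adj i j ↔ i ≠ j ∧ (j = i + 1 ∨ i = j + 1) := by
  simp [_root_.cycleGraph, SimpleGraph.fromRel_adj]

end zmod

section counting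
variable {l : ℕ}

open Classical in
lemma count_eq (hl : 5 ≤ l) (G : SimpleGraph (Option (ZMod l))) :
    haveI : NeZero l := ⟨by omega⟩
    {X | X ∈ connTriples G ∧ none ∈ X}.ncard =
      ((Finset.univ.powersetCard 2).filter
        (fun P : Finset (ZMod l) => insert none (P.image some) ∈ connTriples G)).card := by
  haveI : NeZero l := ⟨by omega⟩
  set e : Finset (ZMod l) → Finset (Option (ZMod l)) :=
    fun P => insert none (P.image some) with he
  set B := ((Finset.univ.powersetCard 2).filter
    (fun P : Finset (ZMod l) => e P ∈ connTriples G)) with hB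
  have hnone : ∀ P : Finset (ZMod l), none ∉ P.image some := by
    intro P h; simp at h
  have hset : {X | X ∈ connTriples G ∧ none ∈ X} = ↑(B.image e) := by
    ext X
    simp only [Set.mem_setOf_eq, Finset.coe_image, Set.mem_image, Finset.mem_coe, hB,
      Finset.mem_filter, Finset.mem_powersetCard_univ]
    constructor
    · rintro ⟨hX, hnX⟩
      have himg : (Finset.univ.filter (fun i => some i ∈ X)).image some = X.erase none := by
        ext o
        cases o with
        | none => simp
        | some i => simp
      refine ⟨Finset.univ.filter (fun i => some i ∈ X), ⟨?_, ?_⟩, ?_⟩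
      · have := Finset.card_image_of_injective
          (Finset.univ.filter (fun i => some i ∈ X)) (Option.some_injective (ZMod l))
        rw [himg] at this
        rw [← this, Finset.card_erase_of_mem hnX, hX.1]
      · show insert none _ ∈ _
        rw [himg, Finset.insert_erase hnX]
        exact hX
      · show insert none _ = X
        rw [himg, Finset.insert_erase hnX]
    · rintro ⟨P, ⟨hP2, hPc⟩, rfl⟩
      exact ⟨hPc, Finset.mem_insert_self _ _⟩
  rw [hset, Set.ncard_coe_finset]
  apply Finset.card_image_of_injOn
  intro P _ Q _ hPQ
  have : (e P).erase none = (e Q).erase none := by rw [hPQ]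
  rw [he] at this
  simp only [Finset.erase_insert (hnone P), Finset.erase_insert (hnone Q)] at this
  exact Finset.image_injective (Option.some_injective (ZMod l)) this

lemma cardA (hl : 5 ≤ l) :
    haveI : NeZero l := ⟨by omega⟩
    ((Finset.univ : Finset (ZMod l)).powersetCard 2).card = l * (l - 1) / 2 := by
  haveI : NeZero l := ⟨by omega⟩
  rw [Finset.card_powersetCard, Finset.card_univ, ZMod.card, Nat.choose_two_right]

lemma part1_forward_rim (hl : 5 ≤ l) (i j : ZMod l) :
    (wheelGraph l).Adj (some i) (some j) ↔ (_root_.cycleGraph l).Adj i j := by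
  rw [wheel_adj_some, cycle_adj]

open Classical in
lemma part1_forward_count (hl : 5 ≤ l) :
    {X | X ∈ connTriples (wheelGraph l) ∧ none ∈ X}.ncard = l * (l - 1) / 2 := by
  haveI : NeZero l := ⟨by omega⟩
  rw [count_eq hl]
  rw [Finset.filter_true_of_mem, cardA hl]
  intro P hP
  rw [Finset.mem_powersetCard_univ] at hP
  obtain ⟨x, y, hxy, rfl⟩ := Finset.card_eq_two.mp hP
  rw [Finset.image_insert, Finset.image_singleton]
  exact triple_mem_of_dom (wheel_adj_none x) (wheel_adj_none y) (by simpa using hxy)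

end counting

open Classical in
lemma part1_backward {l : ℕ} (hl : 5 ≤ l) (G : SimpleGraph (Option (ZMod l)))
    (hrim : ∀ i j : ZMod l, G.Adj (some i) (some j) ↔ (_root_.cycleGraph l).Adj i j)
    (hcount : {X | X ∈ connTriples G ∧ none ∈ X}.ncard = l * (l - 1) / 2) :
    G = wheelGraph l := by
  haveI : NeZero l := ⟨by omega⟩
  set B := ((Finset.univ.powersetCard 2).filter
    (fun P : Finset (ZMod l) => insert none (P.image some) ∈ connTriples G)) with hB
  have hBcard : B.card = l * (l - 1) / 2 := by
    rw [← hcount]; exact (count_eq hl G).symm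
  have hBA : B = Finset.univ.powersetCard 2 := by
    apply Finset.eq_of_subset_of_card_le (Finset.filter_subset _ _)
    rw [hBcard, cardA hl]
  have hub : ∀ i : ZMod l, G.Adj none (some i) := by
    intro i
    by_contra h
    have hP : ({i, i + 2} : Finset (ZMod l)) ∈ Finset.univ.powersetCard 2 := by
      rw [Finset.mem_powersetCard_univ]
      rw [Finset.card_insert_of_notMem (by
        simp only [Finset.mem_singleton]
        exact shift_ne₀ hl i (b := 2) (by norm_num) (by norm_num) ∘ (by simpa using ·)),
        Finset.card_singleton]
    rw [← hBA, Finset.mem_filter] at hP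
    have hmem := hP.2
    have heq : insert none (({i, i + 2} : Finset (ZMod l)).image some) =
        ({some i, none, some (i + 2)} : Finset (Option (ZMod l))) := by
      rw [Finset.image_insert, Finset.image_singleton, Finset.insert_comm]
    rw [heq] at hmem
    rcases triple_nbr hmem (by simp) with h1 | h2
    · exact h h1.symm
    · rw [hrim, cycle_adj] at h2
      rcases h2.2 with h3 | h3
      · have h4 : i + (1 : ℕ) = i + (2 : ℕ) := by push_cast; linear_combination -h3
        exact shift_ne hl i (by norm_num) (by norm_num) h4
      · have h4 : i + (0 : ℕ) = i + (3 : ℕ) := by push_cast; linear_combination h3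
        exact shift_ne hl i (by norm_num) (by norm_num) h4
  ext a b
  cases a with
  | none =>
    cases b with
    | none => exact iff_of_false (G.irrefl) ((wheelGraph l).irrefl)
    | some j => exact iff_of_true (hub j) (wheel_adj_none j)
  | some i =>
    cases b with
    | none => exact iff_of_true (hub i).symm (wheel_adj_none i).symm
    | some j => rw [hrim]; exact (part1_forward_rim hl i j).symm

section part2
variable {l : ℕ}

lemma hSome {x y : ZMod l} (h : x ≠ y) : (some x : Option (ZMod l)) ≠ some y :=
  fun hh => h (Option.some_injective _ hh)

lemma p2_B1 (hl : 5 ≤ l) {H : SimpleGraph (Option (ZMod l))}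
    (hT : connTriples H = connTriples (wheelGraph l)) (m j : ZMod l)
    (h0 : j ≠ m) (h1 : j ≠ m + 1) (h2 : j ≠ m + 2) (h3 : j ≠ m + 3) (h4 : m ≠ j + 1)
    (hadj : H.Adj (some (m + 1)) (some j)) : False := by
  have hk : ∀ k : ZMod l, k ≠ m + 1 → k ≠ j → ¬ H.Adj (some (m + 1)) (some k) := by
    intro k hk1 hk2 hadjk
    have hmem : ({some (m+1), some j, some k} : Finset (Option (ZMod l))) ∈ connTriples H :=
      triple_mem_of_dom hadj hadjk (hSome (Ne.symm hk2))
    rw [hT] at hmem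
    have hmem2 : ({some j, some (m+1), some k} : Finset (Option (ZMod l)))
        ∈ connTriples (wheelGraph l) := by
      rwa [Finset.insert_comm] at hmem
    have hW1 := triple_nbr hmem (hSome (Ne.symm h1))
    have hW2 := triple_nbr hmem2 (hSome h1)
    rcases hW1 with hWj | hWk
    · rw [wheel_adj_some] at hWj
      rcases hWj.2 with h | h
      · exact h2 (by linear_combination h)
      · exact h0 (by linear_combination -h)
    · rcases hW2 with hWj2 | hWk2
      · rw [wheel_adj_some] at hWj2
        rcases hWj2.2 with h | h
        · exact h0 (by linear_combination -h)
        · exact h2 (by linear_combination h)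
      · rw [wheel_adj_some] at hWk hWk2
        rcases hWk.2 with ha | ha <;> rcases hWk2.2 with hb | hb
        · exact h1 (by linear_combination ha - hb)
        · exact h3 (by linear_combination ha + hb)
        · exact h4 (by linear_combination ha + hb)
        · exact h1 (by linear_combination hb - ha)
  -- the consecutive triple around m+1
  have hWmem : ({some (m+1), some m, some (m+2)} : Finset (Option (ZMod l)))
      ∈ connTriples (wheelGraph l) := by
    apply triple_mem_of_dom
    · rw [wheel_adj_some]
      exact ⟨fun h => (shift_ne₀ hl m (b := 1) (by norm_num) (by norm_num))
        (by push_cast; linear_combination -h), Or.inr rfl⟩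
    · rw [wheel_adj_some]
      refine ⟨fun h => (shift_ne hl m (a := 1) (b := 2) (by norm_num) (by norm_num))
        (by push_cast; linear_combination h), Or.inl (by ring)⟩
    · exact hSome (fun h => (shift_ne₀ hl m (b := 2) (by norm_num) (by norm_num))
        (by push_cast; linear_combination h))
  rw [← hT] at hWmem
  rcases triple_nbr hWmem (hSome (fun h => (shift_ne₀ hl m (b := 1) (by norm_num) (by norm_num))
      (by push_cast; linear_combination -h))) with hA | hA
  · exact hk m (fun h => (shift_ne₀ hl m (b := 1) (by norm_num) (by norm_num))
      (by push_cast; linear_combination h)) (Ne.symm h0) hA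
  · exact hk (m+2) (fun h => (shift_ne hl m (a := 1) (b := 2) (by norm_num) (by norm_num))
      (by push_cast; linear_combination -h)) (Ne.symm h2) hA

lemma p2_B2 (hl : 5 ≤ l) {H : SimpleGraph (Option (ZMod l))}
    (hT : connTriples H = connTriples (wheelGraph l)) (m : ZMod l)
    (hadj : H.Adj (some (m + 2)) (some (m + 4))) : False := by
  have hk2 : ∀ k : ZMod l, k ≠ m + 2 → k ≠ m + 3 → k ≠ m + 4 →
      ¬ H.Adj (some (m + 2)) (some k) := by
    intro k hA hB hC hadjk
    have hmem : ({some (m+2), some (m+4), some k} : Finset (Option (ZMod l)))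
        ∈ connTriples H := triple_mem_of_dom hadj hadjk (hSome (Ne.symm hC))
    rw [hT] at hmem
    have hmem2 : ({some (m+4), some (m+2), some k} : Finset (Option (ZMod l)))
        ∈ connTriples (wheelGraph l) := by
      rwa [Finset.insert_comm] at hmem
    have hne24 : (some (m+2) : Option (ZMod l)) ≠ some (m+4) :=
      hSome (fun h => (shift_ne hl m (a := 2) (b := 4) (by norm_num) (by norm_num))
        (by push_cast; linear_combination h))
    have hW1 := triple_nbr hmem hne24
    have hW2 := triple_nbr hmem2 (Ne.symm hne24)
    rcases hW1 with hW1 | hWk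
    · rw [wheel_adj_some] at hW1
      rcases hW1.2 with h | h
      · exact (shift_ne hl m (a := 3) (b := 4) (by norm_num) (by norm_num))
          (by push_cast; linear_combination -h)
      · exact (shift_ne hl m (a := 2) (b := 5) (by norm_num) (by norm_num))
          (by push_cast; linear_combination h)
    · rcases hW2 with hW2 | hWk2
      · rw [wheel_adj_some] at hW2
        rcases hW2.2 with h | h
        · exact (shift_ne hl m (a := 2) (b := 5) (by norm_num) (by norm_num))
            (by push_cast; linear_combination h)
        · exact (shift_ne hl m (a := 3) (b := 4) (by norm_num) (by norm_num))
            (by push_cast; linear_combination -h)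
      · rw [wheel_adj_some] at hWk hWk2
        rcases hWk.2 with ha | ha
        · exact hB (by linear_combination ha)
        · rcases hWk2.2 with hb | hb
          · exact (shift_ne hl m (a := 2) (b := 6) (by norm_num) (by norm_num))
              (by push_cast; linear_combination ha + hb)
          · exact (shift_ne hl m (a := 2) (b := 4) (by norm_num) (by norm_num))
              (by push_cast; linear_combination ha - hb)
  have hWmem : ({some (m+1), some m, some (m+2)} : Finset (Option (ZMod l)))
      ∈ connTriples (wheelGraph l) := by
    apply triple_mem_of_dom
    · rw [wheel_adj_some]
      exact ⟨fun h => (shift_ne₀ hl m (b := 1) (by norm_num) (by norm_num))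
        (by push_cast; linear_combination -h), Or.inr rfl⟩
    · rw [wheel_adj_some]
      refine ⟨fun h => (shift_ne hl m (a := 1) (b := 2) (by norm_num) (by norm_num))
        (by push_cast; linear_combination h), Or.inl (by ring)⟩
    · exact hSome (fun h => (shift_ne₀ hl m (b := 2) (by norm_num) (by norm_num))
        (by push_cast; linear_combination h))
  have hre : ({some (m+1), some m, some (m+2)} : Finset (Option (ZMod l)))
      = {some (m+2), some m, some (m+1)} := by
    ext x; simp only [Finset.mem_insert, Finset.mem_singleton]; tauto
  rw [hre, ← hT] at hWmem
  rcases triple_nbr hWmem (hSome (fun h => (shift_ne₀ hl m (b := 2) (by norm_num) (by norm_num))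
      (by push_cast; linear_combination -h))) with hA | hA
  · exact hk2 m (fun h => (shift_ne₀ hl m (b := 2) (by norm_num) (by norm_num))
      (by push_cast; linear_combination h))
      (fun h => (shift_ne₀ hl m (b := 3) (by norm_num) (by norm_num))
      (by push_cast; linear_combination h))
      (fun h => (shift_ne₀ hl m (b := 4) (by norm_num) (by norm_num))
      (by push_cast; linear_combination h)) hA
  · exact hk2 (m+1) (fun h => (shift_ne hl m (a := 1) (b := 2) (by norm_num) (by norm_num))
      (by push_cast; linear_combination h))
      (fun h => (shift_ne hl m (a := 1) (b := 3) (by norm_num) (by norm_num))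
      (by push_cast; linear_combination h))
      (fun h => (shift_ne hl m (a := 1) (b := 4) (by norm_num) (by norm_num))
      (by push_cast; linear_combination h)) hA

lemma p2_no2 (hl : 5 ≤ l) {H : SimpleGraph (Option (ZMod l))}
    (hT : connTriples H = connTriples (wheelGraph l)) (i : ZMod l) :
    ¬ H.Adj (some i) (some (i + 2)) := by
  intro h
  have e2 : i - 2 + 2 = i := by ring
  have e4 : i - 2 + 4 = i + 2 := by ring
  exact p2_B2 hl hT (i - 2) (by rw [e2, e4]; exact h)

lemma p2_B3 (hl : 5 ≤ l) {H : SimpleGraph (Option (ZMod l))}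
    (hT : connTriples H = connTriples (wheelGraph l)) (m : ZMod l) :
    H.Adj (some m) (some (m + 1)) := by
  by_contra h
  have hWmem : ({some (m+1), some m, some (m+2)} : Finset (Option (ZMod l)))
      ∈ connTriples (wheelGraph l) := by
    apply triple_mem_of_dom
    · rw [wheel_adj_some]
      exact ⟨fun hh => (shift_ne₀ hl m (b := 1) (by norm_num) (by norm_num))
        (by push_cast; linear_combination -hh), Or.inr rfl⟩
    · rw [wheel_adj_some]
      refine ⟨fun hh => (shift_ne hl m (a := 1) (b := 2) (by norm_num) (by norm_num))
        (by push_cast; linear_combination hh), Or.inl (by ring)⟩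
    · exact hSome (fun hh => (shift_ne₀ hl m (b := 2) (by norm_num) (by norm_num))
        (by push_cast; linear_combination hh))
  rw [Finset.insert_comm, ← hT] at hWmem
  rcases triple_nbr hWmem (hSome (fun hh => (shift_ne₀ hl m (b := 1) (by norm_num) (by norm_num))
      (by push_cast; linear_combination hh))) with hA | hA
  · exact h hA
  · exact p2_no2 hl hT m hA

lemma p2_hub (hl : 5 ≤ l) {H : SimpleGraph (Option (ZMod l))}
    (hT : connTriples H = connTriples (wheelGraph l)) (i : ZMod l) :
    H.Adj none (some i) := by
  by_contra h
  have sub : ∀ j : ZMod l, j ≠ i → H.Adj (some i) (some j) := by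
    intro j hj
    have hWmem : ({none, some i, some j} : Finset (Option (ZMod l)))
        ∈ connTriples (wheelGraph l) :=
      triple_mem_of_dom (wheel_adj_none i) (wheel_adj_none j) (hSome (Ne.symm hj))
    rw [Finset.insert_comm, ← hT] at hWmem
    rcases triple_nbr hWmem (by simp) with hA | hA
    · exact absurd hA.symm h
    · exact hA
  have a2 := sub (i + 2) (fun hh => (shift_ne₀ hl i (b := 2) (by norm_num) (by norm_num))
    (by push_cast; linear_combination -hh))
  have a4 := sub (i + 4) (fun hh => (shift_ne₀ hl i (b := 4) (by norm_num) (by norm_num))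
    (by push_cast; linear_combination -hh))
  have hmem : ({some i, some (i+2), some (i+4)} : Finset (Option (ZMod l)))
      ∈ connTriples H :=
    triple_mem_of_dom a2 a4 (hSome (fun hh =>
      (shift_ne hl i (a := 2) (b := 4) (by norm_num) (by norm_num))
      (by push_cast; linear_combination hh)))
  rw [Finset.insert_comm, hT] at hmem
  rcases triple_nbr hmem (hSome (fun hh => (shift_ne₀ hl i (b := 2) (by norm_num) (by norm_num))
      (by push_cast; linear_combination -hh))) with hA | hA
  · rw [wheel_adj_some] at hA
    rcases hA.2 with hh | hh
    · exact (shift_ne₀ hl i (b := 3) (by norm_num) (by norm_num))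
        (by push_cast; linear_combination hh)
    · exact (shift_ne hl i (a := 1) (b := 2) (by norm_num) (by norm_num))
        (by push_cast; linear_combination -hh)
  · rw [wheel_adj_some] at hA
    rcases hA.2 with hh | hh
    · exact (shift_ne hl i (a := 3) (b := 4) (by norm_num) (by norm_num))
        (by push_cast; linear_combination -hh)
    · exact (shift_ne hl i (a := 2) (b := 5) (by norm_num) (by norm_num))
        (by push_cast; linear_combination hh)

lemma p2_rim (hl : 5 ≤ l) {H : SimpleGraph (Option (ZMod l))}
    (hT : connTriples H = connTriples (wheelGraph l)) (i j : ZMod l) :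
    H.Adj (some i) (some j) ↔ i ≠ j ∧ (j = i + 1 ∨ i = j + 1) := by
  constructor
  · intro hadj
    have hij : i ≠ j := fun h => hadj.ne (by rw [h])
    refine ⟨hij, ?_⟩
    by_cases hc1 : j = i + 1
    · exact Or.inl hc1
    by_cases hc2 : i = j + 1
    · exact Or.inr hc2
    exfalso
    by_cases hc3 : j = i + 2
    · exact p2_no2 hl hT i (hc3 ▸ hadj)
    by_cases hc4 : i = j + 2
    · exact p2_no2 hl hT j (hc4 ▸ hadj.symm)
    have e1 : i - 1 + 1 = i := by ring
    refine p2_B1 hl hT (i - 1) j ?_ ?_ ?_ ?_ ?_ (by rw [e1]; exact hadj)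
    · intro hh; exact hc2 (by linear_combination -hh)
    · intro hh; exact hij (by linear_combination -hh)
    · intro hh; exact hc1 (by linear_combination hh)
    · intro hh; exact hc3 (by linear_combination hh)
    · intro hh; exact hc4 (by linear_combination hh)
  · rintro ⟨hij, h | h⟩
    · rw [h]; exact p2_B3 hl hT i
    · rw [h]; exact (p2_B3 hl hT j).symm

lemma part2 (hl : 5 ≤ l) {H : SimpleGraph (Option (ZMod l))}
    (hT : connTriples H = connTriples (wheelGraph l)) : H = wheelGraph l := by
  ext a b
  cases a with
  | none =>
    cases b with
    | none => exact iff_of_false (H.irrefl) ((wheelGraph l).irrefl)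
    | some j => exact iff_of_true (p2_hub hl hT j) (wheel_adj_none j)
  | some i =>
    cases b with
    | none => exact iff_of_true (p2_hub hl hT i).symm (wheel_adj_none i).symm
    | some j => rw [p2_rim hl hT, wheel_adj_some]

end part2

/-- For `l ≥ 5`: a connected graph `G` on the wheel's vertex set is the
`l`-wheel with hub `none` iff `G` minus the hub is the `l`-cycle and the hub
lies in exactly `l(l-1)/2` connected triples; consequently the `l`-wheel is
strongly `T₃`-reconstructible. -/
theorem stmt17 (l : ℕ) (hl : 5 ≤ l) :
    (∀ G : SimpleGraph (Option (ZMod l)), G.Connected →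
      (G = wheelGraph l ↔
        ((∀ i j : ZMod l, G.Adj (some i) (some j) ↔ (cycleGraph l).Adj i j) ∧
          {X | X ∈ connTriples G ∧ none ∈ X}.ncard = l * (l - 1) / 2))) ∧
    (∀ H : SimpleGraph (Option (ZMod l)), H.Connected →
      connTriples H = connTriples (wheelGraph l) → H = wheelGraph l) := by
  constructor
  · intro G _
    constructor
    · rintro rfl
      exact ⟨part1_forward_rim hl, part1_forward_count hl⟩
    · rintro ⟨hrim, hcount⟩
      exact part1_backward hl G hrim hcount
  · intro H _ hT
    exact part2 hl hT
end

section
/- In a 5-connected planar graph G, for every pair of adjacent vertices v, v_i, no superset of N(v) \ {v_i} of the form required for a T₃-neighborhood exists at v_i; concretely: there is no set M ⊆ V(G) \ {v_i} containing N(v) \ {v_i} such that every pair of distinct vertices of M forms a connected triple with v_i. -/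
/-- `H` is a minor of `G`. -/
def HasMinor {V W : Type*} (G : SimpleGraph V) (H : SimpleGraph W) : Prop :=
  ∃ f : W → Set V, (∀ w, (f w).Nonempty) ∧ (∀ w, (G.induce (f w)).Connected) ∧
    (∀ w₁ w₂, w₁ ≠ w₂ → Disjoint (f w₁) (f w₂)) ∧
    (∀ w₁ w₂, H.Adj w₁ w₂ → ∃ a ∈ f w₁, ∃ b ∈ f w₂, G.Adj a b)

/-- A graph is planar iff it has no `K₅` minor and no `K_{3,3}` minor. -/
def IsPlanar {V : Type*} (G : SimpleGraph V) : Prop :=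
  ¬ HasMinor G (⊤ : SimpleGraph (Fin 5)) ∧
    ¬ HasMinor G (completeBipartiteGraph (Fin 3) (Fin 3))

/-- `G` is 5-connected: at least 6 vertices, and removing any set of at most 4
vertices leaves it connected. -/
def FiveConnected {V : Type*} [Fintype V] [DecidableEq V] (G : SimpleGraph V) : Prop :=
  6 ≤ Fintype.card V ∧
    ∀ s : Finset V, s.card ≤ 4 → (G.induce ((↑s : Set V)ᶜ)).Connected

/-- Every pair of distinct vertices of `M` forms a connected triple with `vi`
(at least two of the three pairs are edges). -/
def PairwiseT3 {V : Type*} (G : SimpleGraph V) (vi : V) (M : Set V) : Prop :=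
  ∀ a ∈ M, ∀ b ∈ M, a ≠ b →
    ((G.Adj vi a ∧ G.Adj vi b) ∨ (G.Adj vi a ∧ G.Adj a b) ∨ (G.Adj vi b ∧ G.Adj a b))


-- helpers

lemma induce_singleton_connected {V : Type*} (G : SimpleGraph V) (a : V) :
    (G.induce {a}).Connected := by
  have hne : Nonempty (({a} : Set V) : Type _) := ⟨⟨a, rfl⟩⟩
  refine ⟨fun u w => ?_⟩
  have : u = w := Subtype.ext ((Set.mem_singleton_iff.mp u.2).trans
    (Set.mem_singleton_iff.mp w.2).symm)
  exact this ▸ SimpleGraph.Reachable.refl _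

def compSet {V : Type*} (G : SimpleGraph V) (X : Set V) (x : V) (hx : x ∈ X) : Set V :=
  {w | ∃ h : w ∈ X, (G.induce X).Reachable ⟨w, h⟩ ⟨x, hx⟩}

lemma compSet_mem_self {V : Type*} (G : SimpleGraph V) (X : Set V) (x : V) (hx : x ∈ X) :
    x ∈ compSet G X x hx := ⟨hx, SimpleGraph.Reachable.refl _⟩

lemma compSet_subset {V : Type*} (G : SimpleGraph V) (X : Set V) (x : V) (hx : x ∈ X) :
    compSet G X x hx ⊆ X := fun _ hw => hw.1

lemma compSet_closed {V : Type*} (G : SimpleGraph V) (X : Set V) (x : V) (hx : x ∈ X) :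
    ∀ y ∈ compSet G X x hx, ∀ z ∈ X, G.Adj y z → z ∈ compSet G X x hx := by
  rintro y ⟨hyX, hyr⟩ z hz hadj
  exact ⟨hz, (SimpleGraph.Adj.reachable
    (show (G.induce X).Adj ⟨z, hz⟩ ⟨y, hyX⟩ from hadj.symm)).trans hyr⟩

lemma comp_walk {V : Type*} (G : SimpleGraph V) (X : Set V) (x : V) (hx : x ∈ X)
    (y z : X) (p : (G.induce X).Walk y z) :
    z = ⟨x, hx⟩ → ∀ hy : (y : V) ∈ compSet G X x hx,
      (G.induce (compSet G X x hx)).Reachable ⟨y, hy⟩ ⟨x, compSet_mem_self G X x hx⟩ := by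
  induction p with
  | nil =>
      intro hz hy
      cases hz
      exact SimpleGraph.Reachable.refl _
  | @cons u w z hadj q ih =>
      intro hz hy
      subst hz
      have hw : (w : V) ∈ compSet G X x hx := ⟨w.2, ⟨q⟩⟩
      have hedge : (G.induce (compSet G X x hx)).Adj ⟨u, hy⟩ ⟨w, hw⟩ := hadj
      exact hedge.reachable.trans (ih rfl hw)

lemma comp_connected {V : Type*} (G : SimpleGraph V) (X : Set V) (x : V) (hx : x ∈ X) :
    (G.induce (compSet G X x hx)).Connected := by
  have hne : Nonempty ((compSet G X x hx : Set V) : Type _) :=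
    ⟨⟨x, compSet_mem_self G X x hx⟩⟩
  refine ⟨fun u w => ?_⟩
  have hreach : ∀ (u : compSet G X x hx),
      (G.induce (compSet G X x hx)).Reachable u ⟨x, compSet_mem_self G X x hx⟩ := by
    intro u
    obtain ⟨hu, hr⟩ := u.2
    obtain ⟨p⟩ := hr
    exact comp_walk G X x hx ⟨u, hu⟩ ⟨x, hx⟩ p rfl u.2
  exact (hreach u).trans (hreach w).symm

lemma walk_to_boundary {V : Type*} (G : SimpleGraph V) (Y X C : Set V) (t : V)
    (hYX : ∀ z ∈ Y, z ≠ t → z ∈ X)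
    (hC : ∀ y ∈ C, ∀ z ∈ X, G.Adj y z → z ∈ C)
    (hCt : ∀ y ∈ C, y ≠ t)
    (y z : Y) (p : (G.induce Y).Walk y z) :
    (z : V) = t → (y : V) ∈ C → ∃ u ∈ C, G.Adj u t := by
  induction p with
  | nil =>
      intro hz hy
      exact absurd hz (hCt _ hy)
  | @cons u w z hadj q ih =>
      intro hz hy
      have hadj' : G.Adj u w := hadj
      by_cases hwt : (w : V) = t
      · exact ⟨u, hy, hwt ▸ hadj'⟩
      · exact ih hz (hC u hy w (hYX w w.2 hwt) hadj')

lemma aux_min_degree {V : Type*} [Fintype V] [DecidableEq V] (G : SimpleGraph V)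
    [DecidableRel G.Adj] (h5 : FiveConnected G) (u : V) :
    5 ≤ (G.neighborFinset u).card := by
  by_contra hlt
  push_neg at hlt
  have hcard : (G.neighborFinset u).card ≤ 4 := by omega
  have hconn := h5.2 _ hcard
  have hex : ∃ w, w ∉ insert u (G.neighborFinset u) := by
    by_contra hall
    push_neg at hall
    have hsub : (Finset.univ : Finset V) ⊆ insert u (G.neighborFinset u) :=
      fun w _ => hall w
    have hle := Finset.card_le_card hsub
    have hins := Finset.card_insert_le u (G.neighborFinset u)
    rw [Finset.card_univ] at hle
    have h6 := h5.1
    omega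
  obtain ⟨w, hw⟩ := hex
  have hu : u ∈ (↑(G.neighborFinset u) : Set V)ᶜ := by simp
  have hw' : w ∈ (↑(G.neighborFinset u) : Set V)ᶜ := by
    simp only [Set.mem_compl_iff, Finset.coe_sort_coe, Finset.mem_coe]
    intro hmem
    exact hw (Finset.mem_insert_of_mem hmem)
  obtain ⟨p⟩ := hconn.preconnected ⟨u, hu⟩ ⟨w, hw'⟩
  cases p with
  | nil => exact hw (Finset.mem_insert_self u _)
  | @cons _ y _ hadj q =>
      have hadj' : G.Adj u y := hadj
      exact y.2 (by simpa using hadj')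

set_option maxHeartbeats 1000000 in
/-- In a 5-connected planar graph, for adjacent vertices `v, vi` there is no set
`M ⊆ V \ {vi}` containing `N(v) \ {vi}` all of whose pairs of distinct vertices
form connected triples with `vi`. -/
theorem stmt19 {V : Type*} [Fintype V] [DecidableEq V] (G : SimpleGraph V)
    (h5 : FiveConnected G) (hp : IsPlanar G) (v vi : V) (h : G.Adj v vi) :
    ¬ ∃ M : Set V, vi ∉ M ∧ (G.neighborSet v \ {vi}) ⊆ M ∧ PairwiseT3 G vi M := by
  classical
  rintro ⟨M, hviM, hsub, hT3⟩
  letI : DecidableRel G.Adj := Classical.decRel _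
  have hdeg : 5 ≤ (G.neighborFinset v).card := aux_min_degree G h5 v
  set S : Finset V := (G.neighborFinset v).erase vi with hSdef
  have hvimem : vi ∈ G.neighborFinset v := by
    rw [SimpleGraph.mem_neighborFinset]; exact h
  have hScard : 4 ≤ S.card := by
    rw [hSdef, Finset.card_erase_of_mem hvimem]; omega
  have hSM : ∀ p ∈ S, p ∈ M := by
    intro p hp'
    rw [hSdef, Finset.mem_erase, SimpleGraph.mem_neighborFinset] at hp'
    exact hsub ⟨hp'.2, hp'.1⟩
  have hSne : ∀ p ∈ S, p ≠ vi := by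
    intro p hp'; rw [hSdef, Finset.mem_erase] at hp'; exact hp'.1
  set F : Finset V := S.filter (fun p => G.Adj vi p) with hFdef
  have hFcard : 3 ≤ F.card := by
    have hRcard : (S.filter (fun p => ¬ G.Adj vi p)).card ≤ 1 := by
      by_contra hgt
      push_neg at hgt
      obtain ⟨p, hp', q, hq', hpq⟩ := Finset.one_lt_card.mp hgt
      rw [Finset.mem_filter] at hp' hq'
      rcases hT3 p (hSM p hp'.1) q (hSM q hq'.1) hpq with ⟨h1, _⟩ | ⟨h1, _⟩ | ⟨h1, _⟩
      · exact hp'.2 h1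
      · exact hp'.2 h1
      · exact hq'.2 h1
    have hsum : F.card + (S.filter (fun p => ¬ G.Adj vi p)).card = S.card := by
      simpa using Finset.card_filter_add_card_filter_not
        (s := S) (p := fun p => G.Adj vi p)
    omega
  obtain ⟨a, ha⟩ := Finset.card_pos.mp (show 0 < F.card by omega)
  have hFa : 0 < (F.erase a).card := by
    rw [Finset.card_erase_of_mem ha]; omega
  obtain ⟨b, hb⟩ := Finset.card_pos.mp hFa
  have hFb : 0 < ((F.erase a).erase b).card := by
    rw [Finset.card_erase_of_mem hb, Finset.card_erase_of_mem ha]; omega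
  obtain ⟨c, hc⟩ := Finset.card_pos.mp hFb
  rw [Finset.mem_erase] at hb
  rw [Finset.mem_erase, Finset.mem_erase] at hc
  have hba : b ≠ a := hb.1
  have hcb : c ≠ b := hc.1
  have hca : c ≠ a := hc.2.1
  have hbF := hb.2
  have hcF := hc.2.2
  have hFadj : ∀ p ∈ F, G.Adj v p ∧ G.Adj vi p := by
    intro p hp'
    rw [hFdef, Finset.mem_filter, hSdef, Finset.mem_erase,
      SimpleGraph.mem_neighborFinset] at hp'
    exact ⟨hp'.1.2, hp'.2⟩
  have hva : G.Adj v a := (hFadj a ha).1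
  have hvia : G.Adj vi a := (hFadj a ha).2
  have hvb : G.Adj v b := (hFadj b hbF).1
  have hvib : G.Adj vi b := (hFadj b hbF).2
  have hvc : G.Adj v c := (hFadj c hcF).1
  have hvic : G.Adj vi c := (hFadj c hcF).2
  have hav : a ≠ v := hva.ne'
  have havi : a ≠ vi := hvia.ne'
  have hbv : b ≠ v := hvb.ne'
  have hbvi : b ≠ vi := hvib.ne'
  have hcv : c ≠ v := hvc.ne'
  have hcvi : c ≠ vi := hvic.ne'
  have hvvi : v ≠ vi := h.ne
  -- the five branch vertices
  set T : Finset V := {v, vi, a, b, c} with hTdef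
  have hT5 : T.card ≤ 5 := by
    have h1 := Finset.card_insert_le v ({vi, a, b, c} : Finset V)
    have h2 := Finset.card_insert_le vi ({a, b, c} : Finset V)
    have h3 := Finset.card_insert_le a ({b, c} : Finset V)
    have h4 := Finset.card_insert_le b ({c} : Finset V)
    have h5' : ({c} : Finset V).card = 1 := Finset.card_singleton c
    rw [hTdef]; omega
  set X : Set V := (↑T : Set V)ᶜ with hXdef
  have hex : ∃ x, x ∉ T := by
    by_contra hall
    push_neg at hall
    have hsub' : (Finset.univ : Finset V) ⊆ T := fun w _ => hall w
    have := Finset.card_le_card hsub'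
    rw [Finset.card_univ] at this
    have h6 := h5.1
    omega
  obtain ⟨x, hxT⟩ := hex
  have hx : x ∈ X := by rw [hXdef]; simpa using hxT
  set C : Set V := compSet G X x hx with hCdef
  have hCX : C ⊆ X := compSet_subset G X x hx
  have hCT : ∀ y ∈ C, y ∉ T := by
    intro y hy
    have := hCX hy
    rw [hXdef] at this; simpa using this
  -- every vertex of T has a neighbor in C
  have key : ∀ t ∈ T, ∃ u ∈ C, G.Adj u t := by
    intro t ht
    have hscard : (T.erase t).card ≤ 4 := by
      rw [Finset.card_erase_of_mem ht]; omega
    have hconn := h5.2 (T.erase t) hscard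
    have htc : t ∈ (↑(T.erase t) : Set V)ᶜ := by simp
    have hxc : x ∈ (↑(T.erase t) : Set V)ᶜ := by
      simp only [Set.mem_compl_iff, Finset.coe_sort_coe, Finset.mem_coe]
      intro hmem
      exact hxT (Finset.mem_of_mem_erase hmem)
    obtain ⟨p⟩ := hconn.preconnected ⟨x, hxc⟩ ⟨t, htc⟩
    refine walk_to_boundary G ((↑(T.erase t) : Set V)ᶜ) X C t ?_ ?_ ?_ ⟨x, hxc⟩ ⟨t, htc⟩ p rfl ?_
    · intro z hz hzt
      rw [hXdef]
      simp only [Set.mem_compl_iff, Finset.coe_sort_coe, Finset.mem_coe] at hz ⊢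
      intro hzT
      exact hz (Finset.mem_erase.mpr ⟨hzt, hzT⟩)
    · exact compSet_closed G X x hx
    · intro y hy hyt
      exact hCT y hy (hyt ▸ ht)
    · exact compSet_mem_self G X x hx
  have hCa := key a (by rw [hTdef]; simp)
  have hCb := key b (by rw [hTdef]; simp)
  have hCc := key c (by rw [hTdef]; simp)
  have haC : a ∉ C := fun hmem => hCT a hmem (by rw [hTdef]; simp)
  have hbC : b ∉ C := fun hmem => hCT b hmem (by rw [hTdef]; simp)
  have hcC : c ∉ C := fun hmem => hCT c hmem (by rw [hTdef]; simp)
  have hvC : v ∉ C := fun hmem => hCT v hmem (by rw [hTdef]; simp)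
  have hviC : vi ∉ C := fun hmem => hCT vi hmem (by rw [hTdef]; simp)
  -- build the K_{3,3} minor
  apply hp.2
  refine ⟨Sum.elim ![{a}, {b}, {c}] ![{v}, {vi}, C], ?_, ?_, ?_, ?_⟩
  · rintro (i | i) <;> fin_cases i <;>
      simp only [Sum.elim_inl, Sum.elim_inr, Matrix.cons_val_zero, Matrix.cons_val_one,
        Matrix.head_cons, Matrix.cons_val_two, Matrix.tail_cons]
    · exact Set.singleton_nonempty a
    · exact Set.singleton_nonempty b
    · exact Set.singleton_nonempty c
    · exact Set.singleton_nonempty v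
    · exact Set.singleton_nonempty vi
    · exact ⟨x, compSet_mem_self G X x hx⟩
  · rintro (i | i) <;> fin_cases i <;>
      simp only [Sum.elim_inl, Sum.elim_inr, Matrix.cons_val_zero, Matrix.cons_val_one,
        Matrix.head_cons, Matrix.cons_val_two, Matrix.tail_cons]
    · exact induce_singleton_connected G a
    · exact induce_singleton_connected G b
    · exact induce_singleton_connected G c
    · exact induce_singleton_connected G v
    · exact induce_singleton_connected G vi
    · exact comp_connected G X x hx
  · have hab : a ≠ b := fun e => hba e.symm
    have hac : a ≠ c := fun e => hca e.symm
    have hbc : b ≠ c := fun e => hcb e.symm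
    have hvvi' : vi ≠ v := hvvi.symm
    have hva' : v ≠ a := hav.symm
    have hvb' : v ≠ b := hbv.symm
    have hvc' : v ≠ c := hcv.symm
    have hvia' : vi ≠ a := havi.symm
    have hvib' : vi ≠ b := hbvi.symm
    have hvic' : vi ≠ c := hcvi.symm
    rintro (i | i) (j | j) hne <;> fin_cases i <;> fin_cases j <;>
      (try simp_all [Set.disjoint_singleton_left, Set.disjoint_singleton_right,
        Set.disjoint_left]) <;>
      first
        | exact fun y hy e => haC (e ▸ hy)
        | exact fun y hy e => hbC (e ▸ hy)
        | exact fun y hy e => hcC (e ▸ hy)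
        | exact fun y hy e => hvC (e ▸ hy)
        | exact fun y hy e => hviC (e ▸ hy)
  · obtain ⟨ua, huaC, huaa⟩ := hCa
    obtain ⟨ub, hubC, hubb⟩ := hCb
    obtain ⟨uc, hucC, hucc⟩ := hCc
    rintro (i | i) (j | j) hadj
    · simp [completeBipartiteGraph] at hadj
    · fin_cases i <;> fin_cases j <;>
        simp only [Sum.elim_inl, Sum.elim_inr, Matrix.cons_val_zero, Matrix.cons_val_one,
          Matrix.head_cons, Matrix.cons_val_two, Matrix.tail_cons]
      · exact ⟨a, rfl, v, rfl, hva.symm⟩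
      · exact ⟨a, rfl, vi, rfl, hvia.symm⟩
      · exact ⟨a, rfl, ua, huaC, huaa.symm⟩
      · exact ⟨b, rfl, v, rfl, hvb.symm⟩
      · exact ⟨b, rfl, vi, rfl, hvib.symm⟩
      · exact ⟨b, rfl, ub, hubC, hubb.symm⟩
      · exact ⟨c, rfl, v, rfl, hvc.symm⟩
      · exact ⟨c, rfl, vi, rfl, hvic.symm⟩
      · exact ⟨c, rfl, uc, hucC, hucc.symm⟩
    · fin_cases i <;> fin_cases j <;>
        simp only [Sum.elim_inl, Sum.elim_inr, Matrix.cons_val_zero, Matrix.cons_val_one,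
          Matrix.head_cons, Matrix.cons_val_two, Matrix.tail_cons]
      · exact ⟨v, rfl, a, rfl, hva⟩
      · exact ⟨v, rfl, b, rfl, hvb⟩
      · exact ⟨v, rfl, c, rfl, hvc⟩
      · exact ⟨vi, rfl, a, rfl, hvia⟩
      · exact ⟨vi, rfl, b, rfl, hvib⟩
      · exact ⟨vi, rfl, c, rfl, hvic⟩
      · exact ⟨ua, huaC, a, rfl, huaa⟩
      · exact ⟨ub, hubC, b, rfl, hubb⟩
      · exact ⟨uc, hucC, c, rfl, hucc⟩
    · simp [completeBipartiteGraph] at hadj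
end
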